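/- arXiv:2101.07545 — 2 statements merged into one kernel-verified Lean document; each statement's English description precedes it below -/
import Mathlib

section
/- Let H be a real Hilbert space, λ ∈ ℝ, and let f : H → (-∞,∞] be proper, λ-convex and lower semicontinuous. Let τ > 0 satisfy (1 + τλ)^{-1} ≤ 2 (in particular τ is admissible). Then the Moreau–Yosida regularization f_τ is of class C^{1,1} on H, with its gradient ∇f_τ Lipschitz of constant at most 3/τ: ‖∇f_τ(x) − ∇f_τ(y)‖ ≤ (3/τ)‖x − y‖ for all x, y ∈ H. -/
/-! The objective `z ↦ f z + ‖z - x‖² / (2τ)` is `(λ + 1/τ)`-convex with `λ + 1/τ > 0`, so a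
minimizing sequence is Cauchy and, by lower semicontinuity, converges to a minimizer `J_τ x`,
around which the objective grows at least quadratically. Adding the growth inequalities at `x`
and `y` gives `‖J_τ x - J_τ y‖ ≤ (1 + τλ)⁻¹ ‖x - y‖ ≤ 2 ‖x - y‖`, so `v := (id - J_τ) / τ` is
`3/τ`-Lipschitz. Testing the minimum defining `f_τ y` with `J_τ x` gives
`f_τ y ≤ f_τ x + ⟪v x, y - x⟫ + ‖y - x‖² / (2τ)`; the same bound with `x` and `y` exchanged,
together with the Lipschitz bound on `v`, gives the matching lower bound, hence `∇f_τ = v`. -/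

open Filter Topology MeasureTheory Set
open scoped ENNReal RealInnerProductSpace

noncomputable section

attribute [local instance] Classical.propDecidable

variable {H : Type*} [NormedAddCommGroup H] [InnerProductSpace ℝ H] [CompleteSpace H]

/-- `f : H → (-∞,∞]` is proper: not identically `⊤` (and it never takes the value `⊥`). -/
def ProperFn (f : H → EReal) : Prop :=
  (∃ x, f x ≠ ⊤) ∧ ∀ x, f x ≠ ⊥

/-- `f` is `λ`-convex: `x ↦ f x - (λ/2)‖x‖²` is convex, expressed via the perturbed
convexity inequality. -/
def LambdaConvex (lam : ℝ) (f : H → EReal) : Prop :=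
  ∀ x y : H, ∀ t : ℝ, 0 ≤ t → t ≤ 1 →
    f ((1 - t) • x + t • y)
      ≤ ((1 - t : ℝ) : EReal) * f x + ((t : ℝ) : EReal) * f y
        - ((lam / 2 * (t * (1 - t)) * ‖x - y‖ ^ 2 : ℝ) : EReal)

/-- The subdifferential of a `λ`-convex function at `x` (contained in the domain of `f`). -/
def subdiff (lam : ℝ) (f : H → EReal) (x : H) : Set H :=
  {p : H | f x ≠ ⊤ ∧
    ∀ y : H, f x + ((⟪p, y - x⟫ + lam / 2 * ‖y - x‖ ^ 2 : ℝ) : EReal) ≤ f y}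

/-- `∇f(x)`: the element of minimal norm of `∂f(x)` (junk value `0` if there is none). -/
def gradMin (lam : ℝ) (f : H → EReal) (x : H) : H :=
  if h : ∃ p ∈ subdiff lam f x, ∀ q ∈ subdiff lam f x, ‖p‖ ≤ ‖q‖ then h.choose else 0

/-- `|∇f|(x) ∈ [0,∞]`, equal to `+∞` when `∂f(x) = ∅` (in particular when `f x = ⊤`). -/
def gradNorm (lam : ℝ) (f : H → EReal) (x : H) : ℝ≥0∞ :=
  if (subdiff lam f x).Nonempty then ENNReal.ofReal ‖gradMin lam f x‖ else ⊤

/-- The resolvent `J_τ(x)`: the minimizer of `y ↦ f y + ‖y-x‖²/(2τ)` (junk `0` if none). -/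
def Jres (f : H → EReal) (τ : ℝ) (x : H) : H :=
  if h : ∃ y : H, ∀ z : H,
      f y + ((‖y - x‖ ^ 2 / (2 * τ) : ℝ) : EReal)
        ≤ f z + ((‖z - x‖ ^ 2 / (2 * τ) : ℝ) : EReal)
  then h.choose else 0

/-- The Moreau–Yosida regularization `f_τ(x) = min_y (f y + ‖y-x‖²/(2τ))`. -/
def moreau (f : H → EReal) (τ : ℝ) (x : H) : ℝ :=
  (f (Jres f τ x)).toReal + ‖Jres f τ x - x‖ ^ 2 / (2 * τ)

/-- `γ` is absolutely continuous on `[a,b]` with an integrable derivative. -/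
abbrev IsACCurve (a b : ℝ) (γ : ℝ → H) : Prop :=
  ∃ g : ℝ → H, IntegrableOn g (Icc a b) ∧ ∀ t ∈ Icc a b, γ t = γ a + ∫ s in a..t, g s

/-- The action `I_f^{[a,b]}(γ) = ∫_a^b (‖γ̇‖² + |∇f|²(γ)) dt ∈ [0,∞]`, set to `+∞` when `γ`
is not absolutely continuous. -/
def actionFn (lam : ℝ) (f : H → EReal) (a b : ℝ) (γ : ℝ → H) : ℝ≥0∞ :=
  if h : IsACCurve a b γ then
    ∫⁻ t in Ioc a b, (ENNReal.ofReal (‖h.choose t‖ ^ 2) + gradNorm lam f (γ t) ^ 2)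
  else ⊤

/-- `Θ_{f,x₀,x₁}`: the action on `[0,1]` with endpoint constraints. -/
def Theta (lam : ℝ) (f : H → EReal) (x0 x1 : H) (γ : ℝ → H) : ℝ≥0∞ :=
  if γ 0 = x0 ∧ γ 1 = x1 then actionFn lam f 0 1 γ else ⊤

/-- `Γ_δ(x₀,x_δ)`: infimum of the action over curves joining the endpoints. -/
def GammaInf (lam : ℝ) (f : H → EReal) (δ : ℝ) (x0 xδ : H) : ℝ≥0∞ :=
  ⨅ (γ : ℝ → H) (_ : γ 0 = x0 ∧ γ δ = xδ), actionFn lam f 0 δ γ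

/-- Mosco convergence of `fh` to `f`: recovery sequences for the strong topology, and the
`liminf` inequality along weakly convergent sequences. -/
def Mosco (fh : ℕ → H → EReal) (f : H → EReal) : Prop :=
  (∀ x : H, ∃ xh : ℕ → H, Tendsto xh atTop (𝓝 x) ∧
      Filter.limsup (fun h => fh h (xh h)) atTop ≤ f x) ∧
  (∀ (xh : ℕ → H) (x : H),
      (∀ p : H, Tendsto (fun h => ⟪xh h, p⟫) atTop (𝓝 ⟪x, p⟫)) →
      f x ≤ Filter.liminf (fun h => fh h (xh h)) atTop)


theorem EReal.sub_coe_add_coe_eq {L Q R N : ℝ} (h : Q - L = R - N) (P : EReal) :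
    P - L + Q = P + R - N := by
  induction P
  · simp
  · norm_cast; linarith
  · simp

section NormedGroup

variable {E : Type*} [NormedAddCommGroup E] {f : E → EReal} {τ : ℝ} {x : E}

def moreauObjective (f : E → EReal) (τ : ℝ) (x z : E) : EReal :=
  f z + ((‖z - x‖ ^ 2 / (2 * τ) : ℝ) : EReal)

theorem moreauObjective_ne_top_iff {z : E} : moreauObjective f τ x z ≠ ⊤ ↔ f z ≠ ⊤ :=
  EReal.add_ne_top_iff_ne_top_left (EReal.coe_ne_bot _) (EReal.coe_ne_top _)

theorem moreauObjective_toReal {z : E} (hbot : f z ≠ ⊥) (hz : f z ≠ ⊤) :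
    (moreauObjective f τ x z).toReal = (f z).toReal + ‖z - x‖ ^ 2 / (2 * τ) := by
  rw [moreauObjective, EReal.toReal_add hz hbot (EReal.coe_ne_top _) (EReal.coe_ne_bot _),
    EReal.toReal_coe]

theorem ProperFn.moreauObjective (hf : ProperFn f) : ProperFn (moreauObjective f τ x) :=
  ⟨hf.1.imp fun _ hz => moreauObjective_ne_top_iff.2 hz,
    fun z => EReal.add_ne_bot_iff.2 ⟨hf.2 z, EReal.coe_ne_bot _⟩⟩

theorem LowerSemicontinuous.moreauObjective (hlsc : LowerSemicontinuous f) :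
    LowerSemicontinuous (moreauObjective f τ x) :=
  hlsc.add' (continuous_coe_real_ereal.comp (by fun_prop)).lowerSemicontinuous fun _ =>
    EReal.continuousAt_add (.inr (EReal.coe_ne_bot _)) (.inr (EReal.coe_ne_top _))

end NormedGroup

section InnerProduct

variable {E : Type*} [NormedAddCommGroup E] [InnerProductSpace ℝ E]

theorem norm_sub_smul_add_smul_sq (a b x : E) (t : ℝ) :
    ‖(1 - t) • a + t • b - x‖ ^ 2
      = (1 - t) * ‖a - x‖ ^ 2 + t * ‖b - x‖ ^ 2 - t * (1 - t) * ‖a - b‖ ^ 2 := by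
  have hab : a - b = (a - x) - (b - x) := by abel
  have hcomb : (1 - t) • a + t • b - x = (1 - t) • (a - x) + t • (b - x) := by module
  rw [hcomb, hab, norm_add_sq_real, norm_sub_sq_real (a - x), norm_smul, norm_smul,
    real_inner_smul_left, real_inner_smul_right, mul_pow, mul_pow, Real.norm_eq_abs, sq_abs,
    Real.norm_eq_abs, sq_abs]
  ring

theorem LambdaConvex.add_coe {lam μ : ℝ} {f : E → EReal} (hf : LambdaConvex lam f) {φ : E → ℝ}
    (hφ : ∀ a b : E, ∀ t : ℝ, 0 ≤ t → t ≤ 1 →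
      φ ((1 - t) • a + t • b) ≤ (1 - t) * φ a + t * φ b - μ / 2 * (t * (1 - t)) * ‖a - b‖ ^ 2) :
    LambdaConvex (lam + μ) (fun z => f z + (φ z : EReal)) := by
  intro a b t ht0 ht1
  have hf' := hf a b t ht0 ht1
  have hφ' := EReal.coe_le_coe_iff.2 (hφ a b t ht0 ht1)
  rw [EReal.left_distrib_of_nonneg_of_ne_top (EReal.coe_nonneg.2 (by linarith))
      (EReal.coe_ne_top _), EReal.left_distrib_of_nonneg_of_ne_top (EReal.coe_nonneg.2 ht0)
      (EReal.coe_ne_top _)]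
  calc f ((1 - t) • a + t • b) + (φ ((1 - t) • a + t • b) : EReal)
      ≤ (((1 - t : ℝ) : EReal) * f a + ((t : ℝ) : EReal) * f b
          - ((lam / 2 * (t * (1 - t)) * ‖a - b‖ ^ 2 : ℝ) : EReal))
        + (((1 - t) * φ a + t * φ b - μ / 2 * (t * (1 - t)) * ‖a - b‖ ^ 2 : ℝ) : EReal) :=
        add_le_add hf' hφ'
    _ = _ := by
      rw [add_add_add_comm, ← EReal.coe_mul, ← EReal.coe_mul, ← EReal.coe_add]
      exact EReal.sub_coe_add_coe_eq (by ring) _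

theorem LambdaConvex.moreauObjective {lam τ : ℝ} {f : E → EReal} (hconv : LambdaConvex lam f)
    (x : E) : LambdaConvex (lam + τ⁻¹) (moreauObjective f τ x) :=
  hconv.add_coe fun a b t _ _ => by
    rw [norm_sub_smul_add_smul_sq]
    exact le_of_eq (by ring)

theorem LambdaConvex.toReal_le {lam : ℝ} {g : E → EReal} (hconv : LambdaConvex lam g)
    (hbot : ∀ z, g z ≠ ⊥) {a b : E} (ha : g a ≠ ⊤) (hb : g b ≠ ⊤) {t : ℝ} (ht0 : 0 ≤ t)
    (ht1 : t ≤ 1) :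
    g ((1 - t) • a + t • b) ≠ ⊤ ∧
      (g ((1 - t) • a + t • b)).toReal
        ≤ (1 - t) * (g a).toReal + t * (g b).toReal - lam / 2 * (t * (1 - t)) * ‖a - b‖ ^ 2 := by
  have h := hconv a b t ht0 ht1
  rw [← EReal.coe_toReal ha (hbot a), ← EReal.coe_toReal hb (hbot b), ← EReal.coe_mul,
    ← EReal.coe_mul, ← EReal.coe_add, ← EReal.coe_sub] at h
  exact ⟨ne_top_of_le_ne_top (EReal.coe_ne_top _) h,
    EReal.toReal_coe _ ▸ EReal.toReal_le_toReal h (hbot _) (EReal.coe_ne_top _)⟩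

theorem LambdaConvex.exists_forall_coe_le {μ : ℝ} {g : E → EReal} (hg : ProperFn g)
    (hconv : LambdaConvex μ g) (hlsc : LowerSemicontinuous g) (hμ : 0 < μ) :
    ∃ L : ℝ, ∀ z, (L : EReal) ≤ g z := by
  obtain ⟨⟨u, hu⟩, hbot⟩ := hg
  set c := (g u).toReal
  have hcu : ((c - 1 : ℝ) : EReal) < g u := by
    rw [← EReal.coe_toReal hu (hbot u), EReal.coe_lt_coe_iff]
    exact sub_one_lt _
  obtain ⟨δ, hδ, hball⟩ := Metric.eventually_nhds_iff.1 (hlsc u _ hcu)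
  have hball' : ∀ w, dist w u < δ → g w ≠ ⊤ → c - 1 ≤ (g w).toReal := fun w hw hwtop =>
    EReal.toReal_coe (c - 1) ▸ EReal.toReal_le_toReal (hball hw).le (EReal.coe_ne_bot _) hwtop
  refine ⟨c - 1 - 4 / (μ * δ ^ 2), fun z => ?_⟩
  by_cases hz : g z = ⊤
  · simp [hz]
  rw [← EReal.coe_toReal hz (hbot z), EReal.coe_le_coe_iff]
  by_cases hd : dist z u < δ
  · linarith [hball' z hd hz, show 0 ≤ 4 / (μ * δ ^ 2) by positivity]
  -- Outside the ball, compare `g z` with `g` at the point of `[u, z]` at distance `δ / 2` from `u`.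
  push Not at hd
  rw [dist_eq_norm] at hd
  set d := ‖z - u‖
  have hd0 : 0 < d := hδ.trans_le hd
  set t := δ / (2 * d)
  have ht0 : 0 < t := by positivity
  have htd : t * d = δ / 2 := by simp only [t]; field_simp
  have ht2 : t ≤ 1 / 2 := by rw [div_le_iff₀ (by positivity)]; linarith
  obtain ⟨hwtop, hw⟩ := hconv.toReal_le hbot hu hz ht0.le (by linarith)
  have hwu : dist ((1 - t) • u + t • z) u < δ := by
    rw [dist_eq_norm, show (1 - t) • u + t • z - u = t • (z - u) by module, norm_smul,
      Real.norm_of_nonneg ht0.le, htd]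
    linarith
  have hcw := hball' _ hwu hwtop
  rw [norm_sub_rev] at hw
  have hquad : -(4 / (μ * δ ^ 2)) ≤ μ / 4 * d ^ 2 - 2 * d / δ := by
    have : μ / 4 * d ^ 2 - 2 * d / δ + 4 / (μ * δ ^ 2) = (μ * δ * d - 4) ^ 2 / (4 * μ * δ ^ 2) := by
      field_simp; ring
    nlinarith [this, show 0 ≤ (μ * δ * d - 4) ^ 2 / (4 * μ * δ ^ 2) by positivity]
  have hmain : t * (c - 4 / (μ * δ ^ 2)) ≤ t * (g z).toReal := by
    have h1 : t * (2 * d / δ) = 1 := by simp only [t]; field_simp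
    nlinarith [mul_le_mul_of_nonneg_left hquad ht0.le,
      mul_nonneg ht0.le (mul_nonneg hμ.le (sq_nonneg d))]
  linarith [le_of_mul_le_mul_left hmain ht0]

theorem LambdaConvex.sq_norm_sub_le {μ : ℝ} {g : E → EReal} (hconv : LambdaConvex μ g)
    (hbot : ∀ z, g z ≠ ⊥) {m : ℝ} (hm : ∀ z, (m : EReal) ≤ g z) {a b : E} (ha : g a ≠ ⊤)
    (hb : g b ≠ ⊤) :
    μ / 8 * ‖a - b‖ ^ 2 ≤ ((g a).toReal + (g b).toReal) / 2 - m := by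
  obtain ⟨hwtop, hw⟩ := hconv.toReal_le hbot ha hb (t := 1 / 2) (by norm_num) (by norm_num)
  have hmw := EReal.toReal_coe m ▸ EReal.toReal_le_toReal (hm _) (EReal.coe_ne_bot _) hwtop
  linarith

theorem LambdaConvex.cauchySeq_of_lt_coe_add {μ : ℝ} {g : E → EReal} (hconv : LambdaConvex μ g)
    (hbot : ∀ z, g z ≠ ⊥) (hμ : 0 < μ) {m : ℝ} (hm : ∀ z, (m : EReal) ≤ g z) {v : ℕ → E}
    (hv : ∀ n, g (v n) < ((m + 1 / (n + 1) : ℝ) : EReal)) : CauchySeq v := by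
  have hvtop : ∀ n, g (v n) ≠ ⊤ := fun n => (hv n).ne_top
  have hvlt : ∀ n, (g (v n)).toReal < m + 1 / (n + 1) := fun n => by
    rw [← EReal.coe_lt_coe_iff, EReal.coe_toReal (hvtop n) (hbot _)]
    exact hv n
  refine cauchySeq_of_le_tendsto_0 (fun N : ℕ => √(8 / μ * (1 / (N + 1))))
    (fun n k N hn hk => ?_) ?_
  · have hinv : ∀ {n : ℕ}, N ≤ n → (1 : ℝ) / (n + 1) ≤ 1 / (N + 1) := fun h =>
      one_div_le_one_div_of_le (by positivity) (by exact_mod_cast Nat.succ_le_succ h)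
    have hsq := hconv.sq_norm_sub_le hbot hm (hvtop n) (hvtop k)
    rw [dist_eq_norm, Real.le_sqrt (norm_nonneg _) (by positivity), div_mul_eq_mul_div,
      le_div_iff₀ hμ]
    linarith [hvlt n, hvlt k, hinv hn, hinv hk]
  · simpa using (tendsto_one_div_add_atTop_nhds_zero_nat.const_mul (8 / μ)).sqrt

theorem LambdaConvex.exists_forall_le [CompleteSpace E] {μ : ℝ} {g : E → EReal}
    (hg : ProperFn g) (hconv : LambdaConvex μ g) (hlsc : LowerSemicontinuous g) (hμ : 0 < μ) :
    ∃ y, ∀ z, g y ≤ g z := by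
  obtain ⟨L, hL⟩ := hconv.exists_forall_coe_le hg hlsc hμ
  obtain ⟨⟨u, hu⟩, hbot⟩ := hg
  set m := (⨅ z, g z).toReal
  have hm_eq : (m : EReal) = ⨅ z, g z :=
    EReal.coe_toReal (ne_top_of_le_ne_top hu (iInf_le g u))
      (ne_bot_of_le_ne_bot (EReal.coe_ne_bot L) (le_iInf hL))
  have hm : ∀ z, (m : EReal) ≤ g z := fun z => hm_eq ▸ iInf_le g z
  have hseq : ∀ n : ℕ, ∃ z, g z < ((m + 1 / (n + 1) : ℝ) : EReal) := fun n =>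
    iInf_lt_iff.1 (hm_eq ▸ EReal.coe_lt_coe_iff.2 (lt_add_of_pos_right m (by positivity)))
  choose v hv using hseq
  obtain ⟨y, hy⟩ := cauchySeq_tendsto_of_complete (hconv.cauchySeq_of_lt_coe_add hbot hμ hm hv)
  have hgv : Tendsto (fun n => g (v n)) atTop (𝓝 (m : EReal)) := by
    have hup : Tendsto (fun n : ℕ => ((m + 1 / (n + 1) : ℝ) : EReal)) atTop (𝓝 (m : EReal)) := by
      have h : Tendsto (fun n : ℕ => m + 1 / ((n : ℝ) + 1)) atTop (𝓝 m) := by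
        simpa using tendsto_one_div_add_atTop_nhds_zero_nat.const_add m
      exact (continuous_coe_real_ereal.tendsto m).comp h
    exact tendsto_of_tendsto_of_tendsto_of_le_of_le tendsto_const_nhds hup (fun n => hm (v n))
      fun n => (hv n).le
  refine ⟨y, fun z => le_trans ?_ (hm z)⟩
  by_contra! hmy
  obtain ⟨c, hmc, hcy⟩ := exists_between hmy
  exact (ge_of_tendsto hgv ((hy.eventually (hlsc y c hcy)).mono fun n hn => hn.le)).not_gt hmc

theorem LambdaConvex.toReal_add_sq_le_of_forall_le {μ : ℝ} {g : E → EReal}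
    (hconv : LambdaConvex μ g) (hbot : ∀ z, g z ≠ ⊥) {y : E} (hmin : ∀ z, g y ≤ g z)
    (hy : g y ≠ ⊤) {z : E} (hz : g z ≠ ⊤) :
    (g y).toReal + μ / 2 * ‖z - y‖ ^ 2 ≤ (g z).toReal := by
  have hstep : ∀ t ∈ Ioc (0 : ℝ) 1,
      μ / 2 * ‖z - y‖ ^ 2 * (1 - t) ≤ (g z).toReal - (g y).toReal := by
    rintro t ⟨ht0, ht1⟩
    obtain ⟨hwtop, hw⟩ := hconv.toReal_le hbot hy hz ht0.le ht1
    have hyw := EReal.toReal_le_toReal (hmin _) (hbot y) hwtop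
    rw [norm_sub_rev] at hw
    nlinarith
  have hlim : Tendsto (fun t : ℝ => μ / 2 * ‖z - y‖ ^ 2 * (1 - t)) (𝓝[>] 0)
      (𝓝 (μ / 2 * ‖z - y‖ ^ 2)) := by
    have : Continuous fun t : ℝ => μ / 2 * ‖z - y‖ ^ 2 * (1 - t) := by fun_prop
    simpa using this.continuousWithinAt.tendsto (x := 0) (s := Ioi 0)
  have := le_of_tendsto hlim (by
    filter_upwards [Ioc_mem_nhdsGT zero_lt_one] with t ht using hstep t ht)
  linarith

theorem hasGradientAt_of_sub_sub_inner_le [CompleteSpace E] {g : E → ℝ} {v : E → E} {L c : ℝ}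
    (hv : ∀ x y, ‖v x - v y‖ ≤ L * ‖x - y‖)
    (hg : ∀ x y, g y - g x - ⟪v x, y - x⟫ ≤ c * ‖y - x‖ ^ 2) (x : E) :
    HasGradientAt g (v x) x := by
  rw [hasGradientAt_iff_isLittleO]
  refine (Asymptotics.isBigO_of_le' (c := |c| + |L|) (𝓝 x) fun y => ?_).trans_isLittleO
    (Asymptotics.isLittleO_pow_sub_sub x one_lt_two)
  have hupper := hg x y
  have hlower := hg y x
  have hvyx : -(L * ‖y - x‖ ^ 2) ≤ ⟪v y - v x, y - x⟫ := by
    calc -(L * ‖y - x‖ ^ 2) = -(L * ‖y - x‖ * ‖y - x‖) := by ring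
      _ ≤ -(‖v y - v x‖ * ‖y - x‖) := by gcongr; exact hv y x
      _ ≤ ⟪v y - v x, y - x⟫ := neg_le_of_abs_le (abs_real_inner_le_norm _ _)
  rw [norm_sub_rev x y, show x - y = -(y - x) by abel, inner_neg_right] at hlower
  rw [inner_sub_left] at hvyx
  rw [Real.norm_eq_abs, norm_pow, norm_norm, abs_le]
  have hr : 0 ≤ ‖y - x‖ ^ 2 := by positivity
  constructor <;> nlinarith [le_abs_self c, le_abs_self L, abs_nonneg c, abs_nonneg L]

end InnerProduct

def moreauGrad (f : H → EReal) (τ : ℝ) (x : H) : H :=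
  τ⁻¹ • (x - Jres f τ x)

theorem add_inv_pos_of_one_add_mul_pos {lam τ : ℝ} (hτ : 0 < τ) (hadm : 0 < 1 + τ * lam) :
    0 < lam + τ⁻¹ := by
  rw [show lam + τ⁻¹ = (1 + τ * lam) / τ by field_simp; ring]
  positivity

section Resolvent

variable {lam τ : ℝ} {f : H → EReal}

theorem moreauObjective_Jres_le (hf : ProperFn f) (hconv : LambdaConvex lam f)
    (hlsc : LowerSemicontinuous f) (hτ : 0 < τ) (hadm : 0 < 1 + τ * lam) (x z : H) :
    moreauObjective f τ x (Jres f τ x) ≤ moreauObjective f τ x z := by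
  have hex := (hconv.moreauObjective x).exists_forall_le hf.moreauObjective hlsc.moreauObjective
    (add_inv_pos_of_one_add_mul_pos hτ hadm)
  unfold moreauObjective at hex ⊢
  rw [Jres, dif_pos hex]
  exact hex.choose_spec z

theorem Jres_ne_top (hf : ProperFn f) (hconv : LambdaConvex lam f)
    (hlsc : LowerSemicontinuous f) (hτ : 0 < τ) (hadm : 0 < 1 + τ * lam) (x : H) :
    f (Jres f τ x) ≠ ⊤ := by
  obtain ⟨u, hu⟩ := hf.1
  exact moreauObjective_ne_top_iff.1 (ne_top_of_le_ne_top (moreauObjective_ne_top_iff.2 hu)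
    (moreauObjective_Jres_le hf hconv hlsc hτ hadm x u))

theorem moreau_add_sq_le (hf : ProperFn f) (hconv : LambdaConvex lam f)
    (hlsc : LowerSemicontinuous f) (hτ : 0 < τ) (hadm : 0 < 1 + τ * lam) (x : H) {z : H}
    (hz : f z ≠ ⊤) :
    moreau f τ x + (lam + τ⁻¹) / 2 * ‖z - Jres f τ x‖ ^ 2
      ≤ (f z).toReal + ‖z - x‖ ^ 2 / (2 * τ) := by
  have hJ := Jres_ne_top hf hconv hlsc hτ hadm x
  have h := (hconv.moreauObjective x).toReal_add_sq_le_of_forall_le hf.moreauObjective.2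
    (moreauObjective_Jres_le hf hconv hlsc hτ hadm x) (moreauObjective_ne_top_iff.2 hJ)
    (moreauObjective_ne_top_iff.2 hz)
  rwa [moreauObjective_toReal (hf.2 _) hJ, moreauObjective_toReal (hf.2 _) hz] at h

theorem norm_Jres_sub_le (hf : ProperFn f) (hconv : LambdaConvex lam f)
    (hlsc : LowerSemicontinuous f) (hτ : 0 < τ) (hadm : 0 < 1 + τ * lam) (x y : H) :
    ‖Jres f τ x - Jres f τ y‖ ≤ (1 + τ * lam)⁻¹ * ‖x - y‖ := by
  have hx := moreau_add_sq_le hf hconv hlsc hτ hadm x (Jres_ne_top hf hconv hlsc hτ hadm y)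
  have hy := moreau_add_sq_le hf hconv hlsc hτ hadm y (Jres_ne_top hf hconv hlsc hτ hadm x)
  simp only [moreau] at hx hy
  set p := Jres f τ x
  set q := Jres f τ y
  have hid : ‖q - x‖ ^ 2 + ‖p - y‖ ^ 2 - ‖p - x‖ ^ 2 - ‖q - y‖ ^ 2 = 2 * ⟪p - q, x - y⟫ := by
    simp only [norm_sub_sq_real, inner_sub_left, inner_sub_right, real_inner_comm x]
    ring
  have hkey : (1 + τ * lam) * ‖p - q‖ ^ 2 ≤ ‖p - q‖ * ‖x - y‖ := by
    have hsum : (lam + τ⁻¹) * ‖p - q‖ ^ 2 ≤ τ⁻¹ * ⟪p - q, x - y⟫ := by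
      rw [norm_sub_rev q p] at hx
      have : ‖q - x‖ ^ 2 / (2 * τ) + ‖p - y‖ ^ 2 / (2 * τ) - ‖p - x‖ ^ 2 / (2 * τ)
          - ‖q - y‖ ^ 2 / (2 * τ) = τ⁻¹ * ⟪p - q, x - y⟫ := by
        rw [show τ⁻¹ * ⟪p - q, x - y⟫ = 2 * ⟪p - q, x - y⟫ / (2 * τ) by field_simp, ← hid]
        ring
      linarith
    have hτlam : 1 + τ * lam = τ * (lam + τ⁻¹) := by field_simp; ring
    calc (1 + τ * lam) * ‖p - q‖ ^ 2 = τ * ((lam + τ⁻¹) * ‖p - q‖ ^ 2) := by rw [hτlam]; ring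
      _ ≤ τ * (τ⁻¹ * ⟪p - q, x - y⟫) := by gcongr
      _ = ⟪p - q, x - y⟫ := by field_simp
      _ ≤ ‖p - q‖ * ‖x - y‖ := real_inner_le_norm _ _
  rw [le_inv_mul_iff₀ hadm]
  rcases (norm_nonneg (p - q)).eq_or_lt with hpq | hpq
  · rw [← hpq, mul_zero]; exact norm_nonneg _
  · nlinarith

theorem moreau_sub_sub_inner_le (hf : ProperFn f) (hconv : LambdaConvex lam f)
    (hlsc : LowerSemicontinuous f) (hτ : 0 < τ) (hadm : 0 < 1 + τ * lam) (x y : H) :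
    moreau f τ y - moreau f τ x - ⟪moreauGrad f τ x, y - x⟫ ≤ τ⁻¹ / 2 * ‖y - x‖ ^ 2 := by
  have hy := moreau_add_sq_le hf hconv hlsc hτ hadm y (Jres_ne_top hf hconv hlsc hτ hadm x)
  have hgrowth : 0 ≤ (lam + τ⁻¹) / 2 * ‖Jres f τ x - Jres f τ y‖ ^ 2 :=
    mul_nonneg (half_pos (add_inv_pos_of_one_add_mul_pos hτ hadm)).le (sq_nonneg _)
  set p := Jres f τ x
  have hid : ‖p - y‖ ^ 2 = ‖p - x‖ ^ 2 + 2 * ⟪x - p, y - x⟫ + ‖y - x‖ ^ 2 := by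
    rw [show p - y = (p - x) - (y - x) by abel, norm_sub_sq_real, ← neg_sub x p, inner_neg_left]
    ring
  simp only [moreau, moreauGrad, real_inner_smul_left] at hy ⊢
  rw [hid] at hy
  have : (‖p - x‖ ^ 2 + 2 * ⟪x - p, y - x⟫ + ‖y - x‖ ^ 2) / (2 * τ)
      = ‖p - x‖ ^ 2 / (2 * τ) + τ⁻¹ * ⟪x - p, y - x⟫ + τ⁻¹ / 2 * ‖y - x‖ ^ 2 := by ring
  linarith

theorem norm_moreauGrad_sub_le (hf : ProperFn f) (hconv : LambdaConvex lam f)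
    (hlsc : LowerSemicontinuous f) (hτ : 0 < τ) (hadm : 0 < 1 + τ * lam) (x y : H) :
    ‖moreauGrad f τ x - moreauGrad f τ y‖ ≤ (1 + (1 + τ * lam)⁻¹) / τ * ‖x - y‖ := by
  have hJ := norm_Jres_sub_le hf hconv hlsc hτ hadm x y
  rw [moreauGrad, moreauGrad, ← smul_sub, norm_smul, norm_inv, Real.norm_of_nonneg hτ.le,
    show x - Jres f τ x - (y - Jres f τ y) = (x - y) - (Jres f τ x - Jres f τ y) by abel]
  calc τ⁻¹ * ‖x - y - (Jres f τ x - Jres f τ y)‖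
      ≤ τ⁻¹ * (‖x - y‖ + (1 + τ * lam)⁻¹ * ‖x - y‖) := by gcongr; exact norm_sub_le_of_le le_rfl hJ
    _ = (1 + (1 + τ * lam)⁻¹) / τ * ‖x - y‖ := by ring

theorem hasGradientAt_moreau (hf : ProperFn f) (hconv : LambdaConvex lam f)
    (hlsc : LowerSemicontinuous f) (hτ : 0 < τ) (hadm : 0 < 1 + τ * lam) (x : H) :
    HasGradientAt (moreau f τ) (moreauGrad f τ x) x :=
  hasGradientAt_of_sub_sub_inner_le (norm_moreauGrad_sub_le hf hconv hlsc hτ hadm)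
    (moreau_sub_sub_inner_le hf hconv hlsc hτ hadm) x

end Resolvent

/-- the Moreau–Yosida regularization is `C^{1,1}` with `Lip(∇f_τ) ≤ 3/τ`. -/
theorem statement7 (lam : ℝ) (f : H → EReal)
    (hf : ProperFn f) (hconv : LambdaConvex lam f) (hlsc : LowerSemicontinuous f)
    (τ : ℝ) (hτ : 0 < τ) (hadm : 0 < 1 + τ * lam) (hb : (1 + τ * lam)⁻¹ ≤ 2) :
    (∀ x : H, DifferentiableAt ℝ (moreau f τ) x) ∧
    ∀ x y : H, ‖gradient (moreau f τ) x - gradient (moreau f τ) y‖ ≤ 3 / τ * ‖x - y‖ := by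
  have hgrad := hasGradientAt_moreau hf hconv hlsc hτ hadm
  refine ⟨fun x => (hgrad x).differentiableAt, fun x y => ?_⟩
  rw [(hgrad x).gradient, (hgrad y).gradient]
  calc _ ≤ (1 + (1 + τ * lam)⁻¹) / τ * ‖x - y‖ := norm_moreauGrad_sub_le hf hconv hlsc hτ hadm x y
    _ ≤ 3 / τ * ‖x - y‖ := by gcongr; linarith

end
end

section
/- Let H be a real Hilbert space, λ ∈ ℝ, and let f : H → (-∞,∞] be proper, λ-convex and lower semicontinuous, with all sublevel sets {x : f(x) ≤ t} (t ∈ ℝ) compact in H. Let δ > 0 and x_0, x_δ ∈ H with Γ_δ(x_0, x_δ) < ∞. Then the infimum defining Γ_δ(x_0, x_δ) is attained: there exists an absolutely continuous curve γ : [0,δ] → H with γ(0) = x_0, γ(δ) = x_δ and I_f^δ(γ) = Γ_δ(x_0, x_δ). -/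
open Filter Topology MeasureTheory Set
open scoped ENNReal RealInnerProductSpace

noncomputable section

attribute [local instance] Classical.propDecidable

variable {H : Type*} [NormedAddCommGroup H] [InnerProductSpace ℝ H] [CompleteSpace H]

/-!
Direct method. Along a minimizing sequence the velocities are bounded in `L²((0,δ); H)`, so a
subsequence converges weakly, and the curves converge weakly pointwise to the curve of the limit
velocity. Since the slope part of the action is bounded, every short time window contains a time
where `|∇f|` is small; the subgradient inequality bounds `f` there, and the kinetic bound makes
the curves `½`-Hölder, so all curves of the sequence stay in one compact set built from sublevel
sets of `f`. Hence the convergence is strong pointwise. The kinetic energy is weakly lower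
semicontinuous, and `|∇f|` is lower semicontinuous because the graph of `∂f` is closed under
strong × bounded weak convergence, so Fatou's lemma bounds the action of the limit curve by the
infimum.
-/

theorem ENNReal.le_liminf_add {u v : ℕ → ℝ≥0∞} :
    liminf u atTop + liminf v atTop ≤ liminf (u + v) atTop := by
  simp only [liminf_eq_iSup_iInf_of_nat]
  refine ENNReal.iSup_add_iSup_le fun i j => le_iSup_of_le (max i j) (le_iInf₂ fun k hk => ?_)
  exact add_le_add (iInf₂_le k (le_of_max_le_left hk)) (iInf₂_le k (le_of_max_le_right hk))

theorem LowerSemicontinuous.le_liminf_of_tendsto {X β : Type*} [TopologicalSpace X]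
    [CompleteLinearOrder β] {g : X → β} (hg : LowerSemicontinuous g) {u : ℕ → X} {x : X}
    (hu : Tendsto u atTop (𝓝 x)) : g x ≤ liminf (fun n => g (u n)) atTop := by
  rw [le_liminf_iff]
  exact fun b hb => hu.eventually (hg x b hb)

theorem exists_mem_le_of_setLIntegral_lt {α : Type*} [MeasurableSpace α] {μ : Measure α}
    {G : α → ℝ≥0∞} {J : Set α} {R : ℝ≥0∞} (hJ : MeasurableSet J)
    (h : ∫⁻ x in J, G x ∂μ < R * μ J) : ∃ x ∈ J, G x ≤ R := by
  by_contra! hlt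
  refine h.not_ge ?_
  calc R * μ J = ∫⁻ _ in J, R ∂μ := (setLIntegral_const J R).symm
    _ ≤ ∫⁻ x in J, G x ∂μ :=
      lintegral_mono_ae ((ae_restrict_iff' hJ).2 (Eventually.of_forall fun x hx => (hlt x hx).le))

theorem isCompact_iInter_cthickening {X : Type*} [MetricSpace X] [CompleteSpace X]
    {K : ℕ → Set X} (hK : ∀ n, IsCompact (K n)) {r : ℕ → ℝ} (hr : Tendsto r atTop (𝓝 0)) :
    IsCompact (⋂ n, Metric.cthickening (r n) (K n)) := by
  refine isCompact_iff_totallyBounded_isComplete.2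
    ⟨?_, (isClosed_iInter fun n => Metric.isClosed_cthickening).isComplete⟩
  refine Metric.totallyBounded_iff.2 fun ε hε => ?_
  obtain ⟨n, hn⟩ := (hr.eventually (gt_mem_nhds (half_pos hε))).exists
  obtain ⟨t, ht, hcover⟩ :=
    Metric.totallyBounded_iff.1 (hK n).totallyBounded (ε / 2) (half_pos hε)
  refine ⟨t, ht, fun z hz => ?_⟩
  obtain ⟨y, hy, hzy⟩ := Metric.mem_thickening_iff.1
    (Metric.cthickening_subset_thickening' (half_pos hε) hn _ (mem_iInter.1 hz n))
  obtain ⟨w, hw, hyw⟩ := mem_iUnion₂.1 (hcover hy)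
  exact mem_iUnion₂.2 ⟨w, hw, Metric.mem_ball.2 <| by
    linarith [dist_triangle z y w, Metric.mem_ball.1 hyw]⟩

section

variable {E : Type*} [NormedAddCommGroup E] [InnerProductSpace ℝ E]

theorem tendsto_inner_of_tendsto_inner_of_tendsto {p v : ℕ → E} {q z : E} {M : ℝ}
    (hM : ∀ k, ‖p k‖ ≤ M) (hw : ∀ y, Tendsto (fun k => ⟪p k, y⟫) atTop (𝓝 ⟪q, y⟫))
    (hv : Tendsto v atTop (𝓝 z)) : Tendsto (fun k => ⟪p k, v k⟫) atTop (𝓝 ⟪q, z⟫) := by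
  have hsmall : Tendsto (fun k => ⟪p k, v k - z⟫) atTop (𝓝 0) := by
    refine squeeze_zero_norm (fun k => (norm_inner_le_norm _ _).trans
      (mul_le_mul_of_nonneg_right (hM k) (norm_nonneg _))) ?_
    simpa using ((tendsto_sub_nhds_zero_iff.mpr hv).norm.const_mul M)
  simpa [← inner_add_right] using (hw z).add hsmall

theorem ofReal_norm_sq_le_liminf {p : ℕ → E} {q : E}
    (hw : ∀ y, Tendsto (fun k => ⟪p k, y⟫) atTop (𝓝 ⟪q, y⟫)) :
    ENNReal.ofReal (‖q‖ ^ 2) ≤ liminf (fun k => ENNReal.ofReal (‖p k‖ ^ 2)) atTop := by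
  have hlim : Tendsto (fun k => ENNReal.ofReal (2 * ⟪p k, q⟫ - ‖q‖ ^ 2)) atTop
      (𝓝 (ENNReal.ofReal (‖q‖ ^ 2))) := by
    have := (ENNReal.continuous_ofReal.tendsto _).comp (((hw q).const_mul 2).sub_const (‖q‖ ^ 2))
    rwa [real_inner_self_eq_norm_sq, show 2 * ‖q‖ ^ 2 - ‖q‖ ^ 2 = ‖q‖ ^ 2 by ring] at this
  -- `2⟪p, q⟫ - ‖q‖² ≤ ‖p‖²` is `‖p - q‖² ≥ 0`
  refine hlim.liminf_eq ▸ liminf_le_liminf (Eventually.of_forall fun k =>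
    ENNReal.ofReal_le_ofReal ?_)
  nlinarith [norm_sub_sq_real (p k) q, sq_nonneg ‖p k - q‖]

theorem tendsto_of_tendsto_inner_of_mem_isCompact {K : Set E} (hK : IsCompact K) {u : ℕ → E}
    {x : E} (hu : ∀ n, u n ∈ K) (hw : ∀ y, Tendsto (fun n => ⟪u n, y⟫) atTop (𝓝 ⟪x, y⟫)) :
    Tendsto u atTop (𝓝 x) := by
  refine hK.tendsto_nhds_of_unique_mapClusterPt (Eventually.of_forall hu) fun z _ hz => ?_
  obtain ⟨ψ, hψ, hzψ⟩ := hz.tendsto_subseq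
  have h : ∀ y, ⟪z - x, y⟫ = 0 := fun y => by
    rw [inner_sub_left, sub_eq_zero]
    exact tendsto_nhds_unique (((continuous_id.inner continuous_const).tendsto z).comp hzψ)
      ((hw y).comp hψ.tendsto_atTop)
  simpa [sub_eq_zero] using h (z - x)

variable [CompleteSpace E]

theorem exists_subseq_tendsto_inner_of_separableSpace [TopologicalSpace.SeparableSpace E]
    {p : ℕ → E} {M : ℝ} (hM : ∀ n, ‖p n‖ ≤ M) :
    ∃ (φ : ℕ → ℕ) (q : E), StrictMono φ ∧ ‖q‖ ≤ M ∧
      ∀ y, Tendsto (fun k => ⟪p (φ k), y⟫) atTop (𝓝 ⟪q, y⟫) := by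
  let ℓ : ℕ → WeakDual ℝ E := fun n => StrongDual.toWeakDual (InnerProductSpace.toDual ℝ E (p n))
  have hℓ : ∀ n, ℓ n ∈ WeakDual.toStrongDual ⁻¹' Metric.closedBall 0 M := fun n => by
    simpa [ℓ] using hM n
  obtain ⟨ℓ₀, hℓ₀, φ, hφ, hlim⟩ := WeakDual.isSeqCompact_closedBall ℝ E 0 M hℓ
  refine ⟨φ, (InnerProductSpace.toDual ℝ E).symm (WeakDual.toStrongDual ℓ₀), hφ,
    by simpa using hℓ₀, fun y => ?_⟩
  simpa [ℓ, Function.comp_def] using ((WeakDual.eval_continuous y).tendsto ℓ₀).comp hlim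

theorem exists_subseq_tendsto_inner {p : ℕ → E} {M : ℝ} (hM : ∀ n, ‖p n‖ ≤ M) :
    ∃ (φ : ℕ → ℕ) (q : E), StrictMono φ ∧ ‖q‖ ≤ M ∧
      ∀ y, Tendsto (fun k => ⟪p (φ k), y⟫) atTop (𝓝 ⟪q, y⟫) := by
  set V : Submodule ℝ E := (Submodule.span ℝ (range p)).topologicalClosure
  have : CompleteSpace V := (Submodule.isClosed_topologicalClosure _).completeSpace_coe
  have : TopologicalSpace.SeparableSpace V :=
    ((countable_range p).isSeparable.span.closure).separableSpace
  have hpV : ∀ n, p n ∈ V := fun n =>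
    Submodule.le_topologicalClosure _ (Submodule.subset_span ⟨n, rfl⟩)
  obtain ⟨φ, q, hφ, hqM, hlim⟩ :=
    exists_subseq_tendsto_inner_of_separableSpace (p := fun n => (⟨p n, hpV n⟩ : V)) hM
  refine ⟨φ, q, hφ, hqM, fun y => ?_⟩
  rw [← Submodule.inner_orthogonalProjectionOnto_eq_of_mem_left]
  simpa using hlim (V.orthogonalProjectionOnto y)

end

section

variable {E : Type*} [NormedAddCommGroup E] [InnerProductSpace ℝ E] {lam : ℝ} {f : E → EReal}

theorem convex_subdiff (x : E) : Convex ℝ (subdiff lam f x) := by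
  rintro p₁ ⟨hx, h₁⟩ p₂ ⟨-, h₂⟩ a b ha hb hab
  refine ⟨hx, fun y => ?_⟩
  set r₁ := ⟪p₁, y - x⟫ + lam / 2 * ‖y - x‖ ^ 2
  set r₂ := ⟪p₂, y - x⟫ + lam / 2 * ‖y - x‖ ^ 2
  have hr : ⟪a • p₁ + b • p₂, y - x⟫ + lam / 2 * ‖y - x‖ ^ 2 ≤ max r₁ r₂ := by
    have : ⟪a • p₁ + b • p₂, y - x⟫ + lam / 2 * ‖y - x‖ ^ 2 = a * r₁ + b * r₂ := by
      simp only [r₁, r₂, inner_add_left, real_inner_smul_left]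
      linear_combination (lam / 2 * ‖y - x‖ ^ 2) * hab.symm
    rw [this]
    calc a * r₁ + b * r₂ ≤ a * max r₁ r₂ + b * max r₁ r₂ :=
          add_le_add (mul_le_mul_of_nonneg_left (le_max_left r₁ r₂) ha)
            (mul_le_mul_of_nonneg_left (le_max_right r₁ r₂) hb)
      _ = max r₁ r₂ := by rw [← add_mul, hab, one_mul]
  refine (add_le_add le_rfl (EReal.coe_le_coe_iff.2 hr)).trans ?_
  rcases max_choice r₁ r₂ with h | h <;> rw [h]
  exacts [h₁ y, h₂ y]

theorem isClosed_subdiff {x : E} (hx : f x ≠ ⊥) : IsClosed (subdiff lam f x) := by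
  by_cases hxt : f x = ⊤
  · simp [subdiff, hxt]
  have hrepr : subdiff lam f x = ⋂ y, (fun p => (((f x).toReal +
      (⟪p, y - x⟫ + lam / 2 * ‖y - x‖ ^ 2) : ℝ) : EReal)) ⁻¹' Iic (f y) := by
    ext p
    simp only [subdiff, mem_ofPred_eq, mem_iInter, mem_preimage, mem_Iic, EReal.coe_add,
      EReal.coe_toReal hxt hx, ne_eq, hxt, not_false_eq_true, true_and]
  rw [hrepr]
  exact isClosed_iInter fun y => isClosed_Iic.preimage (continuous_coe_real_ereal.comp
    (continuous_const.add ((continuous_id.inner continuous_const).add continuous_const)))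

theorem toReal_add_le_of_mem_subdiff {x p y : E} (hx : f x ≠ ⊥) (hp : p ∈ subdiff lam f x)
    (hy : f y ≠ ⊤) : (f x).toReal + (⟪p, y - x⟫ + lam / 2 * ‖y - x‖ ^ 2) ≤ (f y).toReal := by
  have h := hp.2 y
  have hyb : f y ≠ ⊥ := ne_bot_of_le_ne_bot (by
    rw [← EReal.coe_toReal hp.1 hx, ← EReal.coe_add]; exact EReal.coe_ne_bot _) h
  rwa [← EReal.coe_toReal hp.1 hx, ← EReal.coe_toReal hy hyb, ← EReal.coe_add,
    EReal.coe_le_coe_iff] at h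

theorem toReal_le_of_mem_subdiff {x p y : E} (hx : f x ≠ ⊥) (hp : p ∈ subdiff lam f x)
    (hy : f y ≠ ⊤) :
    (f x).toReal ≤ (f y).toReal + ‖p‖ * ‖y - x‖ + |lam| / 2 * ‖y - x‖ ^ 2 := by
  have hlam : -(|lam| / 2 * ‖y - x‖ ^ 2) ≤ lam / 2 * ‖y - x‖ ^ 2 := by
    nlinarith [neg_abs_le lam, sq_nonneg ‖y - x‖]
  linarith [toReal_add_le_of_mem_subdiff hx hp hy, neg_abs_le ⟪p, y - x⟫,
    abs_real_inner_le_norm p (y - x)]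

theorem mem_subdiff_of_tendsto (hf : ProperFn f) (hlsc : LowerSemicontinuous f) {u p : ℕ → E}
    {x q : E} {M : ℝ} (hu : Tendsto u atTop (𝓝 x)) (hp : ∀ k, p k ∈ subdiff lam f (u k))
    (hM : ∀ k, ‖p k‖ ≤ M) (hw : ∀ y, Tendsto (fun k => ⟪p k, y⟫) atTop (𝓝 ⟪q, y⟫)) :
    q ∈ subdiff lam f x := by
  have key : ∀ y, f y ≠ ⊤ →
      f x ≤ (((f y).toReal - (⟪q, y - x⟫ + lam / 2 * ‖y - x‖ ^ 2) : ℝ) : EReal) := by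
    intro y hy
    have hv : Tendsto (fun k => y - u k) atTop (𝓝 (y - x)) := tendsto_const_nhds.sub hu
    have hr := tendsto_const_nhds (x := (f y).toReal).sub
      ((tendsto_inner_of_tendsto_inner_of_tendsto hM hw hv).add
        ((hv.norm.pow 2).const_mul (lam / 2)))
    calc f x ≤ liminf (fun k => f (u k)) atTop := hlsc.le_liminf_of_tendsto hu
      _ ≤ liminf (fun k => (((f y).toReal - (⟪p k, y - u k⟫ + lam / 2 * ‖y - u k‖ ^ 2) : ℝ)
          : EReal)) atTop := liminf_le_liminf (Eventually.of_forall fun k => by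
            rw [← EReal.coe_toReal (hp k).1 (hf.2 _), EReal.coe_le_coe_iff]
            linarith [toReal_add_le_of_mem_subdiff (hf.2 _) (hp k) hy])
      _ = _ := ((continuous_coe_real_ereal.tendsto _).comp hr).liminf_eq
  obtain ⟨y₀, hy₀⟩ := hf.1
  have hx : f x ≠ ⊤ := ne_top_of_le_ne_top (EReal.coe_ne_top _) (key y₀ hy₀)
  refine ⟨hx, fun y => ?_⟩
  by_cases hy : f y = ⊤
  · simp [hy]
  have h := key y hy
  rw [← EReal.coe_toReal hx (hf.2 x), EReal.coe_le_coe_iff] at h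
  rw [← EReal.coe_toReal hx (hf.2 x), ← EReal.coe_toReal hy (hf.2 y), ← EReal.coe_add,
    EReal.coe_le_coe_iff]
  linarith

variable [CompleteSpace E]

theorem gradMin_mem_subdiff_and_norm_le {x : E} (hx : f x ≠ ⊥) (hne : (subdiff lam f x).Nonempty) :
    gradMin lam f x ∈ subdiff lam f x ∧ ∀ q ∈ subdiff lam f x, ‖gradMin lam f x‖ ≤ ‖q‖ := by
  obtain ⟨v, hv, hvmin⟩ := exists_norm_eq_iInf_of_complete_convex hne
    (isClosed_subdiff hx).isComplete (convex_subdiff x) 0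
  have hex : ∃ p ∈ subdiff lam f x, ∀ q ∈ subdiff lam f x, ‖p‖ ≤ ‖q‖ := by
    simp only [zero_sub, norm_neg] at hvmin
    refine ⟨v, hv, fun q hq => hvmin ▸ ?_⟩
    exact ciInf_le ⟨0, forall_mem_range.2 fun _ => norm_nonneg _⟩ (⟨q, hq⟩ : subdiff lam f x)
  rw [gradMin, dif_pos hex]
  exact hex.choose_spec

theorem gradNorm_le_of_mem_subdiff {x q : E} (hx : f x ≠ ⊥) (hq : q ∈ subdiff lam f x) :
    gradNorm lam f x ≤ ENNReal.ofReal ‖q‖ := by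
  rw [gradNorm, if_pos ⟨q, hq⟩]
  exact ENNReal.ofReal_le_ofReal ((gradMin_mem_subdiff_and_norm_le hx ⟨q, hq⟩).2 q hq)

theorem exists_mem_subdiff_ofReal_norm_eq {x : E} (hx : f x ≠ ⊥) (hfin : gradNorm lam f x ≠ ⊤) :
    ∃ p ∈ subdiff lam f x, ENNReal.ofReal ‖p‖ = gradNorm lam f x := by
  have hne : (subdiff lam f x).Nonempty := by
    by_contra h
    exact hfin (if_neg h)
  exact ⟨gradMin lam f x, (gradMin_mem_subdiff_and_norm_le hx hne).1, (if_pos hne).symm⟩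

theorem gradNorm_le_of_tendsto (hf : ProperFn f) (hlsc : LowerSemicontinuous f) {u : ℕ → E}
    {x : E} (hu : Tendsto u atTop (𝓝 x)) {c : ℝ≥0∞} (hc : ∀ k, gradNorm lam f (u k) ≤ c) :
    gradNorm lam f x ≤ c := by
  rcases eq_or_ne c ⊤ with rfl | hctop
  · exact le_top
  choose p hp hpc using fun k =>
    exists_mem_subdiff_ofReal_norm_eq (hf.2 (u k)) (ne_top_of_le_ne_top hctop (hc k))
  have hM : ∀ k, ‖p k‖ ≤ c.toReal := fun k =>
    (ENNReal.ofReal_le_iff_le_toReal hctop).1 ((hpc k).trans_le (hc k))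
  obtain ⟨φ, q, hφ, hqM, hw⟩ := exists_subseq_tendsto_inner hM
  have hq : q ∈ subdiff lam f x :=
    mem_subdiff_of_tendsto hf hlsc (hu.comp hφ.tendsto_atTop) (fun k => hp (φ k))
      (fun k => hM (φ k)) hw
  calc gradNorm lam f x ≤ ENNReal.ofReal ‖q‖ := gradNorm_le_of_mem_subdiff (hf.2 x) hq
    _ ≤ c := ENNReal.ofReal_le_of_le_toReal hqM

theorem lowerSemicontinuous_gradNorm (hf : ProperFn f) (hlsc : LowerSemicontinuous f) :
    LowerSemicontinuous (gradNorm lam f) :=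
  lowerSemicontinuous_iff_isClosed_preimage.2 fun _ =>
    IsSeqClosed.isClosed fun _ _ hu hlim => gradNorm_le_of_tendsto hf hlsc hlim hu

end

section

variable {α E : Type*} [MeasurableSpace α] {μ : Measure α} [NormedAddCommGroup E]

theorem memLp_two_of_lintegral_ne_top {g : α → E} (hg : AEStronglyMeasurable g μ)
    (h : ∫⁻ x, ENNReal.ofReal (‖g x‖ ^ 2) ∂μ ≠ ⊤) : MemLp g 2 μ :=
  (memLp_two_iff_integrable_sq_norm hg).2 ⟨hg.norm.pow 2,
    (hasFiniteIntegral_iff_ofReal (Eventually.of_forall fun _ => sq_nonneg _)).2 h.lt_top⟩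

variable [InnerProductSpace ℝ E]

theorem ofReal_norm_sq_eq_lintegral (F : Lp E 2 μ) :
    ENNReal.ofReal (‖F‖ ^ 2) = ∫⁻ x, ENNReal.ofReal (‖F x‖ ^ 2) ∂μ := by
  rw [← real_inner_self_eq_norm_sq, L2.inner_def]
  simp_rw [real_inner_self_eq_norm_sq]
  exact ofReal_integral_eq_lintegral_ofReal ((Lp.memLp F).integrable_norm_pow two_ne_zero)
    (Eventually.of_forall fun _ => sq_nonneg _)

variable [CompleteSpace E] [IsFiniteMeasure μ]

theorem inner_indicatorConstLp_eq_inner_setIntegral (F : Lp E 2 μ) {S : Set α}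
    (hS : MeasurableSet S) (c : E) :
    ⟪indicatorConstLp 2 hS (measure_ne_top μ S) c, F⟫ = ⟪c, ∫ x in S, F x ∂μ⟫ := by
  rw [L2.inner_indicatorConstLp_eq_setIntegral_inner, integral_inner]
  exact ((Lp.memLp F).integrable one_le_two).integrableOn

theorem norm_setIntegral_le (F : Lp E 2 μ) {S : Set α} (hS : MeasurableSet S) :
    ‖∫ x in S, F x ∂μ‖ ≤ √(μ.real S) * ‖F‖ := by
  set v := ∫ x in S, F x ∂μ
  have h : ‖v‖ ^ 2 ≤ ‖v‖ * (√(μ.real S) * ‖F‖) := by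
    calc ‖v‖ ^ 2 = ⟪indicatorConstLp 2 hS (measure_ne_top μ S) v, F⟫ := by
          rw [inner_indicatorConstLp_eq_inner_setIntegral, real_inner_self_eq_norm_sq]
      _ ≤ ‖indicatorConstLp 2 hS (measure_ne_top μ S) v‖ * ‖F‖ := real_inner_le_norm _ _
      _ = ‖v‖ * (√(μ.real S) * ‖F‖) := by
          rw [norm_indicatorConstLp two_ne_zero ENNReal.ofNat_ne_top, Real.sqrt_eq_rpow]
          norm_num [mul_assoc]
  rcases (norm_nonneg v).eq_or_lt with h0 | hpos
  · rw [← h0]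
    positivity
  · exact le_of_mul_le_mul_left (by nlinarith) hpos

theorem tendsto_inner_setIntegral {F : ℕ → Lp E 2 μ} {G : Lp E 2 μ}
    (hw : ∀ W, Tendsto (fun k => ⟪F k, W⟫) atTop (𝓝 ⟪G, W⟫)) {S : Set α}
    (hS : MeasurableSet S) (c : E) :
    Tendsto (fun k => ⟪∫ x in S, F k x ∂μ, c⟫) atTop (𝓝 ⟪∫ x in S, G x ∂μ, c⟫) := by
  convert hw (indicatorConstLp 2 hS (measure_ne_top μ S) c) using 2 <;>
    rw [real_inner_comm, real_inner_comm (indicatorConstLp _ _ _ _),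
      inner_indicatorConstLp_eq_inner_setIntegral]

end

section

variable {E : Type*} [NormedAddCommGroup E]

theorem integrableOn_Icc_of_Lp {δ : ℝ} (F : Lp E 2 (volume.restrict (Ioc (0 : ℝ) δ))) :
    IntegrableOn F (Icc 0 δ) := by
  rw [integrableOn_Icc_iff_integrableOn_Ioc]
  exact (Lp.memLp F).integrable one_le_two

variable [NormedSpace ℝ E]

def curveOfVelocity (δ : ℝ) (x : E) (F : Lp E 2 (volume.restrict (Ioc (0 : ℝ) δ))) (t : ℝ) :
    E :=
  x + ∫ s in Ioc 0 t, F s ∂(volume.restrict (Ioc 0 δ))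

variable {δ : ℝ} {x : E} {F : Lp E 2 (volume.restrict (Ioc (0 : ℝ) δ))}

@[simp]
theorem curveOfVelocity_zero : curveOfVelocity δ x F 0 = x := by
  simp [curveOfVelocity]

theorem curveOfVelocity_eq_add_intervalIntegral {t : ℝ} (ht : t ∈ Icc 0 δ) :
    curveOfVelocity δ x F t = x + ∫ s in 0..t, F s := by
  rw [curveOfVelocity, Measure.restrict_restrict measurableSet_Ioc,
    inter_eq_left.2 (Ioc_subset_Ioc_right ht.2), intervalIntegral.integral_of_le ht.1]

theorem continuousOn_curveOfVelocity : ContinuousOn (curveOfVelocity δ x F) (Icc 0 δ) :=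
  continuousOn_const.add (intervalIntegral.continuousOn_primitive
    (((Lp.memLp F).integrable one_le_two).integrableOn))

end

section

variable {E : Type*} [NormedAddCommGroup E] [InnerProductSpace ℝ E]
  {δ : ℝ} {x : E} {F : Lp E 2 (volume.restrict (Ioc (0 : ℝ) δ))}

theorem isACCurve_curveOfVelocity : IsACCurve 0 δ (curveOfVelocity δ x F) :=
  ⟨F, integrableOn_Icc_of_Lp F, fun t ht => by
    rw [curveOfVelocity_eq_add_intervalIntegral ht, curveOfVelocity_zero]⟩

variable [CompleteSpace E]

theorem dist_curveOfVelocity_le {s t : ℝ} (hs : 0 ≤ s) (ht : 0 ≤ t) :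
    dist (curveOfVelocity δ x F s) (curveOfVelocity δ x F t) ≤ √|t - s| * ‖F‖ := by
  wlog hst : s ≤ t generalizing s t
  · rw [dist_comm, abs_sub_comm]
    exact this ht hs (le_of_not_ge hst)
  have hint : Integrable F (volume.restrict (Ioc 0 δ)) := (Lp.memLp F).integrable one_le_two
  have hsplit : ∫ u in Ioc 0 t, F u ∂(volume.restrict (Ioc 0 δ)) =
      (∫ u in Ioc 0 s, F u ∂(volume.restrict (Ioc 0 δ))) +
        ∫ u in Ioc s t, F u ∂(volume.restrict (Ioc 0 δ)) := by
    rw [← setIntegral_union (Ioc_disjoint_Ioc_of_le le_rfl) measurableSet_Ioc hint.integrableOn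
      hint.integrableOn, Ioc_union_Ioc_eq_Ioc hs hst]
  rw [dist_comm, dist_eq_norm, curveOfVelocity, curveOfVelocity, hsplit, add_sub_add_left_eq_sub,
    add_sub_cancel_left]
  refine (norm_setIntegral_le F measurableSet_Ioc).trans
    (mul_le_mul_of_nonneg_right (Real.sqrt_le_sqrt ?_) (norm_nonneg _))
  calc (volume.restrict (Ioc 0 δ)).real (Ioc s t) ≤ volume.real (Ioc s t) :=
        ENNReal.toReal_mono measure_Ioc_lt_top.ne (Measure.restrict_apply_le _ _)
    _ = |t - s| := by rw [Real.volume_real_Ioc_of_le hst, abs_of_nonneg (sub_nonneg.2 hst)]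

theorem tendsto_inner_curveOfVelocity {F : ℕ → Lp E 2 (volume.restrict (Ioc (0 : ℝ) δ))}
    {G : Lp E 2 (volume.restrict (Ioc (0 : ℝ) δ))}
    (hw : ∀ W, Tendsto (fun k => ⟪F k, W⟫) atTop (𝓝 ⟪G, W⟫)) (t : ℝ) (c : E) :
    Tendsto (fun k => ⟪curveOfVelocity δ x (F k) t, c⟫) atTop
      (𝓝 ⟪curveOfVelocity δ x G t, c⟫) := by
  simp only [curveOfVelocity, inner_add_left]
  exact tendsto_const_nhds.add (tendsto_inner_setIntegral hw measurableSet_Ioc c)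

end

section

variable {E : Type*} [NormedAddCommGroup E] [InnerProductSpace ℝ E] [CompleteSpace E]
  {lam : ℝ} {f : E → EReal}

theorem ae_restrict_Ioc_eq_of_intervalIntegral_eq {g₁ g₂ : ℝ → E} {a b : ℝ}
    (h₁ : IntegrableOn g₁ (Icc a b)) (h₂ : IntegrableOn g₂ (Icc a b))
    (h : ∀ t ∈ Icc a b, ∫ s in a..t, g₁ s = ∫ s in a..t, g₂ s) :
    g₁ =ᵐ[volume.restrict (Ioc a b)] g₂ := by
  rcases lt_or_ge b a with hba | hab
  · simp [Ioc_eq_empty_of_le hba.le, EventuallyEq]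
  rw [EventuallyEq, ← Measure.restrict_congr_set Ioo_ae_eq_Ioc,
    ae_restrict_iff' measurableSet_Ioo]
  rw [← uIcc_of_le hab] at h₁ h₂
  filter_upwards [h₁.intervalIntegrable.ae_hasDerivAt_integral,
    h₂.intervalIntegrable.ae_hasDerivAt_integral] with t ht₁ ht₂ ht
  have htI : t ∈ uIcc a b := uIcc_of_le hab ▸ Ioo_subset_Icc_self ht
  have heq : (fun x => ∫ s in a..x, g₁ s) =ᶠ[𝓝 t] fun x => ∫ s in a..x, g₂ s :=
    eventually_of_mem (Icc_mem_nhds ht.1 ht.2) h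
  exact (ht₁ htI a left_mem_uIcc).unique ((ht₂ htI a left_mem_uIcc).congr_of_eventuallyEq heq)

theorem actionFn_eq_lintegral {a b : ℝ} {γ g : ℝ → E} (hg : IntegrableOn g (Icc a b))
    (hγ : ∀ t ∈ Icc a b, γ t = γ a + ∫ s in a..t, g s) :
    actionFn lam f a b γ =
      ∫⁻ t in Ioc a b, (ENNReal.ofReal (‖g t‖ ^ 2) + gradNorm lam f (γ t) ^ 2) := by
  have hAC : IsACCurve a b γ := ⟨g, hg, hγ⟩
  rw [actionFn, dif_pos hAC]
  refine lintegral_congr_ae ?_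
  filter_upwards [ae_restrict_Ioc_eq_of_intervalIntegral_eq hAC.choose_spec.1 hg
    fun t ht => add_left_cancel ((hAC.choose_spec.2 t ht).symm.trans (hγ t ht))] with t ht
  rw [ht]

theorem actionFn_congr {a b : ℝ} {γ₁ γ₂ : ℝ → E} (h : EqOn γ₁ γ₂ (Icc a b)) :
    actionFn lam f a b γ₁ = actionFn lam f a b γ₂ := by
  have transfer : ∀ {γ γ' g : ℝ → E}, EqOn γ γ' (Icc a b) →
      (∀ t ∈ Icc a b, γ t = γ a + ∫ s in a..t, g s) →
      ∀ t ∈ Icc a b, γ' t = γ' a + ∫ s in a..t, g s := fun h hγ t ht => by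
    rw [← h ht, ← h (left_mem_Icc.2 (ht.1.trans ht.2)), hγ t ht]
  by_cases hAC : IsACCurve a b γ₁
  · obtain ⟨g, hg, hγ₁⟩ := hAC
    rw [actionFn_eq_lintegral hg hγ₁, actionFn_eq_lintegral hg (transfer h hγ₁)]
    exact setLIntegral_congr_fun measurableSet_Ioc fun t ht => by
      rw [h (Ioc_subset_Icc_self ht)]
  · have hAC₂ : ¬IsACCurve a b γ₂ := fun ⟨g, hg, hγ₂⟩ => hAC ⟨g, hg, transfer h.symm hγ₂⟩
    rw [actionFn, actionFn, dif_neg hAC, dif_neg hAC₂]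

theorem actionFn_curveOfVelocity {δ : ℝ} (x : E) (F : Lp E 2 (volume.restrict (Ioc (0 : ℝ) δ))) :
    actionFn lam f 0 δ (curveOfVelocity δ x F) = ENNReal.ofReal (‖F‖ ^ 2) +
      ∫⁻ t in Ioc 0 δ, gradNorm lam f (curveOfVelocity δ x F t) ^ 2 := by
  rw [actionFn_eq_lintegral (integrableOn_Icc_of_Lp F) fun t ht => by
      rw [curveOfVelocity_eq_add_intervalIntegral ht, curveOfVelocity_zero],
    lintegral_add_left' ((Lp.aestronglyMeasurable F).norm.aemeasurable.pow_const 2).ennreal_ofReal,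
    ofReal_norm_sq_eq_lintegral]

theorem exists_eqOn_curveOfVelocity {δ : ℝ} {γ : ℝ → E} (h : actionFn lam f 0 δ γ ≠ ⊤) :
    ∃ F : Lp E 2 (volume.restrict (Ioc (0 : ℝ) δ)),
      EqOn γ (curveOfVelocity δ (γ 0) F) (Icc 0 δ) := by
  obtain ⟨g, hg, hγ⟩ : IsACCurve 0 δ γ := by
    by_contra hAC
    exact h (dif_neg hAC)
  have hL2 : MemLp g 2 (volume.restrict (Ioc 0 δ)) := by
    refine memLp_two_of_lintegral_ne_top (hg.mono_set Ioc_subset_Icc_self).aestronglyMeasurable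
      (ne_top_of_le_ne_top h ?_)
    rw [actionFn_eq_lintegral hg hγ]
    exact lintegral_mono fun t => le_self_add
  refine ⟨hL2.toLp g, fun t ht => ?_⟩
  rw [curveOfVelocity_eq_add_intervalIntegral ht, hγ t ht]
  congr 1
  refine intervalIntegral.integral_congr_ae
    (((ae_restrict_iff' measurableSet_Ioc).1 hL2.coeFn_toLp).mono fun s hs hst => (hs ?_).symm)
  rw [uIoc_of_le ht.1] at hst
  exact Ioc_subset_Ioc_right ht.2 hst

end

section

variable {E : Type*} [NormedAddCommGroup E] [InnerProductSpace ℝ E] {lam : ℝ} {f : E → EReal}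
  {δ : ℝ}

theorem gammaInf_le_actionFn {x0 xδ : E} {γ : ℝ → E} (h : γ 0 = x0 ∧ γ δ = xδ) :
    GammaInf lam f δ x0 xδ ≤ actionFn lam f 0 δ γ :=
  iInf₂_le γ h

theorem exists_seq_tendsto_gammaInf {x0 xδ : E} (hfin : GammaInf lam f δ x0 xδ ≠ ⊤) :
    ∃ Γ : ℕ → ℝ → E, (∀ n, Γ n 0 = x0 ∧ Γ n δ = xδ) ∧
      (∀ n, actionFn lam f 0 δ (Γ n) ≤ GammaInf lam f δ x0 xδ + 1) ∧
      Tendsto (fun n => actionFn lam f 0 δ (Γ n)) atTop (𝓝 (GammaInf lam f δ x0 xδ)) := by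
  have hε : Tendsto (fun n : ℕ => GammaInf lam f δ x0 xδ + ((n : ℝ≥0∞) + 1)⁻¹) atTop
      (𝓝 (GammaInf lam f δ x0 xδ)) := by
    simpa using tendsto_const_nhds.add
      (ENNReal.tendsto_inv_nat_nhds_zero.comp (tendsto_add_atTop_nat 1))
  have h : ∀ n : ℕ, ∃ γ : ℝ → E, (γ 0 = x0 ∧ γ δ = xδ) ∧
      actionFn lam f 0 δ γ < GammaInf lam f δ x0 xδ + ((n : ℝ≥0∞) + 1)⁻¹ := fun n => by
    have hlt := ENNReal.lt_add_right hfin (by simp : ((n : ℝ≥0∞) + 1)⁻¹ ≠ 0)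
    conv_lhs at hlt => rw [GammaInf]
    simpa only [iInf_lt_iff, exists_prop] using hlt
  choose Γ hΓ hlt using h
  refine ⟨Γ, hΓ, fun n => (hlt n).le.trans (add_le_add le_rfl (ENNReal.inv_le_one.2 le_add_self)),
    tendsto_of_tendsto_of_tendsto_of_le_of_le tendsto_const_nhds hε
      (fun n => gammaInf_le_actionFn (hΓ n)) fun n => (hlt n).le⟩

end

section

variable {E : Type*} [NormedAddCommGroup E] [InnerProductSpace ℝ E] [CompleteSpace E]
  {lam : ℝ} {f : E → EReal} {δ : ℝ}

/-- Within any time window of length `ℓ` some time has `|∇f| ≤ √(2C/ℓ)` (Chebyshev), hence a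
bounded value of `f` by the subgradient inequality, and the curve moves by at most `√ℓ ‖F‖`
inside the window. -/
theorem curveOfVelocity_mem_cthickening (hfb : ∀ z, f z ≠ ⊥) {x : E}
    {F : Lp E 2 (volume.restrict (Ioc (0 : ℝ) δ))} {C : ℝ} (hC : 0 < C)
    (hslope : ∫⁻ t in Ioc 0 δ, gradNorm lam f (curveOfVelocity δ x F t) ^ 2 ≤ ENNReal.ofReal C)
    {y : E} (hy : f y ≠ ⊤) {D : ℝ} (hD : ∀ t ∈ Icc 0 δ, ‖y - curveOfVelocity δ x F t‖ ≤ D)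
    {ℓ : ℝ} (hℓ : 0 < ℓ) (hℓδ : ℓ ≤ δ) {t : ℝ} (ht : t ∈ Icc 0 δ) :
    curveOfVelocity δ x F t ∈ Metric.cthickening (√ℓ * ‖F‖)
      {z | f z ≤ (((f y).toReal + √(2 * C / ℓ) * D + |lam| / 2 * D ^ 2 : ℝ) : EReal)} := by
  set γ := curveOfVelocity δ x F
  set R := √(2 * C / ℓ)
  set u := min t (δ - ℓ)
  have hJ : Ioc u (u + ℓ) ⊆ Ioc 0 δ :=
    Ioc_subset_Ioc (le_min ht.1 (by linarith)) (by linarith [min_le_right t (δ - ℓ)])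
  obtain ⟨t', ht'J, ht'R⟩ : ∃ t' ∈ Ioc u (u + ℓ),
      gradNorm lam f (γ t') ^ 2 ≤ ENNReal.ofReal R ^ 2 := by
    refine exists_mem_le_of_setLIntegral_lt measurableSet_Ioc
      (((lintegral_mono_set hJ).trans hslope).trans_lt ?_)
    have h2C : 0 < 2 * C / ℓ := div_pos (by linarith) hℓ
    rw [Real.volume_Ioc, ← ENNReal.ofReal_pow (Real.sqrt_nonneg _), Real.sq_sqrt h2C.le,
      ← ENNReal.ofReal_mul h2C.le, add_sub_cancel_left, div_mul_cancel₀ _ hℓ.ne',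
      ENNReal.ofReal_lt_ofReal_iff (by linarith)]
    linarith
  have ht'I : t' ∈ Icc 0 δ := Ioc_subset_Icc_self (hJ ht'J)
  rw [ENNReal.pow_le_pow_left_iff two_ne_zero] at ht'R
  obtain ⟨p, hp, hpγ⟩ :=
    exists_mem_subdiff_ofReal_norm_eq (hfb _) (ne_top_of_le_ne_top ENNReal.ofReal_ne_top ht'R)
  have hpR : ‖p‖ ≤ R := (ENNReal.ofReal_le_ofReal_iff (Real.sqrt_nonneg _)).1 (hpγ.trans_le ht'R)
  refine Metric.mem_cthickening_of_dist_le _ (γ t') _ _ ?_ ?_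
  · have hyγ := hD t' ht'I
    rw [mem_ofPred_eq, ← EReal.coe_toReal hp.1 (hfb _), EReal.coe_le_coe_iff]
    have hsq : ‖y - γ t'‖ ^ 2 ≤ D ^ 2 := pow_le_pow_left₀ (norm_nonneg _) hyγ 2
    nlinarith [toReal_le_of_mem_subdiff (hfb _) hp hy, abs_nonneg lam,
      mul_le_mul hpR hyγ (norm_nonneg _) (Real.sqrt_nonneg _)]
  · refine (dist_curveOfVelocity_le ht.1 ht'I.1).trans
      (mul_le_mul_of_nonneg_right (Real.sqrt_le_sqrt ?_) (norm_nonneg _))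
    have hu : t - ℓ ≤ u := le_min (by linarith) (by linarith [ht.2])
    rw [abs_le]
    constructor <;> linarith [ht'J.1, ht'J.2, min_le_left t (δ - ℓ)]

theorem exists_isCompact_forall_curveOfVelocity_mem (hf : ProperFn f)
    (hcpt : ∀ c : ℝ, IsCompact {z : E | f z ≤ (c : EReal)}) (hδ : 0 < δ) (x : E) {M C : ℝ}
    (hC : 0 < C) :
    ∃ K : Set E, IsCompact K ∧ ∀ F : Lp E 2 (volume.restrict (Ioc (0 : ℝ) δ)), ‖F‖ ≤ M →
      ∫⁻ t in Ioc 0 δ, gradNorm lam f (curveOfVelocity δ x F t) ^ 2 ≤ ENNReal.ofReal C →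
      ∀ t ∈ Icc 0 δ, curveOfVelocity δ x F t ∈ K := by
  obtain ⟨y, hy⟩ := hf.1
  set D := ‖y - x‖ + √δ * M
  set ℓ : ℕ → ℝ := fun n => δ / ((n : ℝ) + 1) ^ 2
  have hℓ : ∀ n, 0 < ℓ n := fun n => by positivity
  have hℓδ : ∀ n, ℓ n ≤ δ := fun n =>
    div_le_self hδ.le (one_le_pow₀ (by linarith [n.cast_nonneg (α := ℝ)]))
  have hℓ0 : Tendsto (fun n => √(ℓ n) * M) atTop (𝓝 0) := by
    have : Tendsto ℓ atTop (𝓝 0) := tendsto_const_nhds.div_atTop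
      ((tendsto_pow_atTop two_ne_zero).comp
        (tendsto_natCast_atTop_atTop.atTop_add tendsto_const_nhds))
    simpa using ((Real.continuous_sqrt.tendsto 0).comp this).mul_const M
  refine ⟨⋂ n, Metric.cthickening (√(ℓ n) * M)
      {z | f z ≤ (((f y).toReal + √(2 * C / ℓ n) * D + |lam| / 2 * D ^ 2 : ℝ) : EReal)},
    isCompact_iInter_cthickening (fun n => hcpt _) hℓ0,
    fun F hFM hslope t ht => mem_iInter.2 fun n => ?_⟩
  have hD : ∀ τ ∈ Icc 0 δ, ‖y - curveOfVelocity δ x F τ‖ ≤ D := fun τ hτ => by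
    have hdist := dist_curveOfVelocity_le (x := x) (F := F) le_rfl hτ.1
    rw [curveOfVelocity_zero, dist_eq_norm, sub_zero, abs_of_nonneg hτ.1] at hdist
    calc ‖y - curveOfVelocity δ x F τ‖ ≤ ‖y - x‖ + ‖x - curveOfVelocity δ x F τ‖ :=
          norm_sub_le_norm_sub_add_norm_sub _ _ _
      _ ≤ D := add_le_add le_rfl (hdist.trans (mul_le_mul (Real.sqrt_le_sqrt hτ.2) hFM
          (norm_nonneg _) (Real.sqrt_nonneg _)))
  exact Metric.cthickening_mono (mul_le_mul_of_nonneg_left hFM (Real.sqrt_nonneg _)) _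
    (curveOfVelocity_mem_cthickening hf.2 hC hslope hy hD (hℓ n) (hℓδ n) ht)

theorem exists_subseq_tendsto_curveOfVelocity (hf : ProperFn f)
    (hcpt : ∀ c : ℝ, IsCompact {z : E | f z ≤ (c : EReal)}) (hδ : 0 < δ) (x : E)
    {F : ℕ → Lp E 2 (volume.restrict (Ioc (0 : ℝ) δ))} {M C : ℝ} (hC : 0 < C)
    (hM : ∀ n, ‖F n‖ ≤ M)
    (hslope : ∀ n, ∫⁻ t in Ioc 0 δ, gradNorm lam f (curveOfVelocity δ x (F n) t) ^ 2 ≤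
      ENNReal.ofReal C) :
    ∃ (φ : ℕ → ℕ) (G : Lp E 2 (volume.restrict (Ioc (0 : ℝ) δ))), StrictMono φ ∧
      (∀ W, Tendsto (fun k => ⟪F (φ k), W⟫) atTop (𝓝 ⟪G, W⟫)) ∧
      ∀ t ∈ Icc 0 δ, Tendsto (fun k => curveOfVelocity δ x (F (φ k)) t) atTop
        (𝓝 (curveOfVelocity δ x G t)) := by
  obtain ⟨φ, G, hφ, -, hw⟩ := exists_subseq_tendsto_inner hM
  obtain ⟨K, hK, hmem⟩ := exists_isCompact_forall_curveOfVelocity_mem (lam := lam) hf hcpt hδ x hC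
  exact ⟨φ, G, hφ, hw, fun t ht => tendsto_of_tendsto_inner_of_mem_isCompact hK
    (fun k => hmem _ (hM _) (hslope _) t ht) (tendsto_inner_curveOfVelocity hw t)⟩

theorem actionFn_curveOfVelocity_le_liminf (hf : ProperFn f) (hlsc : LowerSemicontinuous f)
    {x : E} {F : ℕ → Lp E 2 (volume.restrict (Ioc (0 : ℝ) δ))}
    {G : Lp E 2 (volume.restrict (Ioc (0 : ℝ) δ))}
    (hw : ∀ W, Tendsto (fun k => ⟪F k, W⟫) atTop (𝓝 ⟪G, W⟫))
    (hlim : ∀ t ∈ Icc 0 δ, Tendsto (fun k => curveOfVelocity δ x (F k) t) atTop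
      (𝓝 (curveOfVelocity δ x G t))) :
    actionFn lam f 0 δ (curveOfVelocity δ x G) ≤
      liminf (fun k => actionFn lam f 0 δ (curveOfVelocity δ x (F k))) atTop := by
  borelize E
  have hsq : LowerSemicontinuous fun z => gradNorm lam f z ^ 2 :=
    (ENNReal.continuous_pow 2).comp_lowerSemicontinuous (lowerSemicontinuous_gradNorm hf hlsc)
      fun _ _ h => pow_le_pow_left' h 2
  have hmeas : ∀ k, AEMeasurable (fun t => gradNorm lam f (curveOfVelocity δ x (F k) t) ^ 2)
      (volume.restrict (Ioc 0 δ)) := fun k =>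
    hsq.measurable.comp_aemeasurable ((continuousOn_curveOfVelocity.aemeasurable
      measurableSet_Icc).mono_measure (Measure.restrict_mono Ioc_subset_Icc_self le_rfl))
  have hslope : ∫⁻ t in Ioc 0 δ, gradNorm lam f (curveOfVelocity δ x G t) ^ 2 ≤
      liminf (fun k => ∫⁻ t in Ioc 0 δ, gradNorm lam f (curveOfVelocity δ x (F k) t) ^ 2)
        atTop :=
    calc ∫⁻ t in Ioc 0 δ, gradNorm lam f (curveOfVelocity δ x G t) ^ 2
        ≤ ∫⁻ t in Ioc 0 δ, liminf (fun k => gradNorm lam f (curveOfVelocity δ x (F k) t) ^ 2)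
            atTop :=
          lintegral_mono_ae ((ae_restrict_iff' measurableSet_Ioc).2 (Eventually.of_forall
            fun t ht => hsq.le_liminf_of_tendsto (hlim t (Ioc_subset_Icc_self ht))))
      _ ≤ _ := lintegral_liminf_le' hmeas
  simp only [actionFn_curveOfVelocity]
  exact (add_le_add (ofReal_norm_sq_le_liminf hw) hslope).trans ENNReal.le_liminf_add

theorem exists_subseq_tendsto_actionFn_le_liminf (hf : ProperFn f) (hlsc : LowerSemicontinuous f)
    (hcpt : ∀ c : ℝ, IsCompact {z : E | f z ≤ (c : EReal)}) (hδ : 0 < δ) {Γ : ℕ → ℝ → E}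
    {x0 : E} (hΓ0 : ∀ n, Γ n 0 = x0) {C : ℝ≥0∞} (hC : C ≠ ⊤)
    (hΓC : ∀ n, actionFn lam f 0 δ (Γ n) ≤ C) :
    ∃ (σ : ℕ → ℕ) (γ : ℝ → E), StrictMono σ ∧ IsACCurve 0 δ γ ∧ γ 0 = x0 ∧
      (∀ t ∈ Icc 0 δ, Tendsto (fun k => Γ (σ k) t) atTop (𝓝 (γ t))) ∧
      actionFn lam f 0 δ γ ≤ liminf (fun k => actionFn lam f 0 δ (Γ (σ k))) atTop := by
  choose F hF using fun n => exists_eqOn_curveOfVelocity (ne_top_of_le_ne_top hC (hΓC n))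
  simp only [hΓ0] at hF
  have hact : ∀ n, actionFn lam f 0 δ (Γ n) = actionFn lam f 0 δ (curveOfVelocity δ x0 (F n)) :=
    fun n => actionFn_congr (hF n)
  have hbound : ∀ n, ENNReal.ofReal (‖F n‖ ^ 2) +
      ∫⁻ t in Ioc 0 δ, gradNorm lam f (curveOfVelocity δ x0 (F n) t) ^ 2 ≤ C := fun n => by
    rw [← actionFn_curveOfVelocity, ← hact]
    exact hΓC n
  have hM : ∀ n, ‖F n‖ ≤ √C.toReal := fun n => Real.le_sqrt_of_sq_le
    ((ENNReal.ofReal_le_iff_le_toReal hC).1 (le_self_add.trans (hbound n)))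
  have hslope : ∀ n, ∫⁻ t in Ioc 0 δ, gradNorm lam f (curveOfVelocity δ x0 (F n) t) ^ 2 ≤
      ENNReal.ofReal (C.toReal + 1) := fun n =>
    (le_add_self.trans (hbound n)).trans
      ((ENNReal.le_ofReal_iff_toReal_le hC (by positivity)).2 (le_add_of_nonneg_right zero_le_one))
  obtain ⟨φ, G, hφ, hw, hlim⟩ :=
    exists_subseq_tendsto_curveOfVelocity hf hcpt hδ x0 (by positivity) hM hslope
  refine ⟨φ, curveOfVelocity δ x0 G, hφ, isACCurve_curveOfVelocity, curveOfVelocity_zero,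
    fun t ht => (hlim t ht).congr fun k => (hF _ ht).symm, ?_⟩
  simp only [hact]
  exact actionFn_curveOfVelocity_le_liminf hf hlsc hw hlim

end

theorem statement13_general (lam : ℝ) (f : H → EReal)
    (hf : ProperFn f) (hlsc : LowerSemicontinuous f)
    (hcpt : ∀ t : ℝ, IsCompact {x : H | f x ≤ (t : EReal)})
    (δ : ℝ) (hδ : 0 < δ) (x0 xδ : H) (hfin : GammaInf lam f δ x0 xδ ≠ ⊤) :
    ∃ γ : ℝ → H, IsACCurve 0 δ γ ∧ γ 0 = x0 ∧ γ δ = xδ ∧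
      actionFn lam f 0 δ γ = GammaInf lam f δ x0 xδ := by
  obtain ⟨Γ, hΓ, hΓle, hΓlim⟩ := exists_seq_tendsto_gammaInf hfin
  obtain ⟨σ, γ, hσ, hγAC, hγ0, hγlim, hγle⟩ := exists_subseq_tendsto_actionFn_le_liminf hf hlsc
    hcpt hδ (fun n => (hΓ n).1) (ENNReal.add_ne_top.2 ⟨hfin, ENNReal.one_ne_top⟩) hΓle
  have hγδ : γ δ = xδ := tendsto_nhds_unique (hγlim δ (right_mem_Icc.2 hδ.le))
    (by simp only [(hΓ _).2, tendsto_const_nhds])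
  exact ⟨γ, hγAC, hγ0, hγδ, le_antisymm (hγle.trans_eq (hΓlim.comp hσ.tendsto_atTop).liminf_eq)
    (gammaInf_le_actionFn ⟨hγ0, hγδ⟩)⟩

/-- under compact sublevels, the infimum `Γ_δ` is attained when finite. -/
theorem statement13 (lam : ℝ) (f : H → EReal)
    (hf : ProperFn f) (hconv : LambdaConvex lam f) (hlsc : LowerSemicontinuous f)
    (hcpt : ∀ t : ℝ, IsCompact {x : H | f x ≤ (t : EReal)})
    (δ : ℝ) (hδ : 0 < δ) (x0 xδ : H) (hfin : GammaInf lam f δ x0 xδ ≠ ⊤) :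
    ∃ γ : ℝ → H, IsACCurve 0 δ γ ∧ γ 0 = x0 ∧ γ δ = xδ ∧
      actionFn lam f 0 δ γ = GammaInf lam f δ x0 xδ :=
  statement13_general lam f hf hlsc hcpt δ hδ x0 xδ hfin

end
end
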